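/- arXiv:math/9903021 — 2 statements merged into one kernel-verified Lean document; each statement's English description precedes it below -/
import Mathlib

section
/- Let V be a finite-dimensional complex inner product space, m ≥ 2, and let ρ : ℝ^m → End(V) be a Clifford multiplication (ρ(α)* = -ρ(α), ρ(α)^2 = -|α|^2 Id). Let e^1, ..., e^m be the standard orthonormal basis of ℝ^m and suppose v_1, ..., v_m ∈ V satisfy the Dirac-type relation ρ(e^1)v_1 + ρ(e^2)v_2 + ... + ρ(e^m)v_m = 0. Then m·|v_1|^2 ≤ (m-1)·(|v_1|^2 + ... + |v_m|^2). -/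
/-- Algebraic core of the Kato–Yau inequality for harmonic spinors. -/
theorem kato_yau_algebraic {m : ℕ} {V : Type*} [NormedAddCommGroup V]
    [InnerProductSpace ℂ V] [FiniteDimensional ℂ V] (hm : 2 ≤ m)
    (ρ : EuclideanSpace ℝ (Fin m) →ₗ[ℝ] (V →ₗ[ℂ] V))
    (hskew : ∀ α, LinearMap.adjoint (ρ α) = -ρ α)
    (hsq : ∀ α, (ρ α) ∘ₗ (ρ α) = -((‖α‖ : ℂ) ^ 2) • (LinearMap.id : V →ₗ[ℂ] V))
    (v : Fin m → V)
    (hv : ∑ i, ρ (EuclideanSpace.single i (1 : ℝ)) (v i) = 0) :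
    (m : ℝ) * ‖v ⟨0, by omega⟩‖ ^ 2 ≤ ((m : ℝ) - 1) * ∑ i, ‖v i‖ ^ 2 := by
  set i0 : Fin m := ⟨0, by omega⟩
  have hiso : ∀ (i : Fin m) (w : V), ‖ρ (EuclideanSpace.single i (1 : ℝ)) w‖ = ‖w‖ := by
    intro i w
    set α := EuclideanSpace.single i (1 : ℝ)
    have hα : ‖α‖ = 1 := by simp [α, EuclideanSpace.norm_single]
    have h1 : inner ℂ (ρ α w) (ρ α w) = (inner ℂ w w : ℂ) := by
      rw [← LinearMap.adjoint_inner_right, hskew]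
      have h2 : ρ α (ρ α w) = -w := by
        have := congrArg (fun f => f w) (hsq α)
        simpa [hα, LinearMap.comp_apply] using this
      simp [h2]
    have h3 : ‖ρ α w‖ ^ 2 = ‖w‖ ^ 2 := by
      rw [← @inner_self_eq_norm_sq ℂ, ← @inner_self_eq_norm_sq ℂ]
      exact congrArg Complex.re h1
    nlinarith [norm_nonneg (ρ α w), norm_nonneg w]
  have hmem : i0 ∈ (Finset.univ : Finset (Fin m)) := Finset.mem_univ _
  have hsum : ρ (EuclideanSpace.single i0 (1 : ℝ)) (v i0)
      = -∑ i ∈ Finset.univ.erase i0, ρ (EuclideanSpace.single i (1 : ℝ)) (v i) := by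
    rw [← Finset.add_sum_erase Finset.univ
      (fun i => ρ (EuclideanSpace.single i (1 : ℝ)) (v i)) hmem] at hv
    exact eq_neg_of_add_eq_zero_left hv
  have h4 : ‖v i0‖ ≤ ∑ i ∈ Finset.univ.erase i0, ‖v i‖ := by
    calc ‖v i0‖ = ‖ρ (EuclideanSpace.single i0 (1 : ℝ)) (v i0)‖ := (hiso i0 (v i0)).symm
      _ = ‖∑ i ∈ Finset.univ.erase i0, ρ (EuclideanSpace.single i (1 : ℝ)) (v i)‖ := by
          rw [hsum, norm_neg]
      _ ≤ ∑ i ∈ Finset.univ.erase i0, ‖ρ (EuclideanSpace.single i (1 : ℝ)) (v i)‖ :=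
          norm_sum_le _ _
      _ = ∑ i ∈ Finset.univ.erase i0, ‖v i‖ := by
          exact Finset.sum_congr rfl fun i _ => hiso i (v i)
  have hcard : ((Finset.univ.erase i0).card : ℝ) = (m : ℝ) - 1 := by
    rw [Finset.card_erase_of_mem hmem]
    simp only [Finset.card_univ, Fintype.card_fin]
    have : 1 ≤ m := by omega
    push_cast [this]
    ring
  have h5 : (∑ i ∈ Finset.univ.erase i0, ‖v i‖) ^ 2
      ≤ ((m : ℝ) - 1) * ∑ i ∈ Finset.univ.erase i0, ‖v i‖ ^ 2 := by
    have := sq_sum_le_card_mul_sum_sq (s := Finset.univ.erase i0) (f := fun i => ‖v i‖)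
    rw [hcard] at this
    exact this
  have hsplit : ∑ i, ‖v i‖ ^ 2 = ‖v i0‖ ^ 2 + ∑ i ∈ Finset.univ.erase i0, ‖v i‖ ^ 2 :=
    (Finset.add_sum_erase Finset.univ (fun i => ‖v i‖ ^ 2) hmem).symm
  have hS : 0 ≤ ∑ i ∈ Finset.univ.erase i0, ‖v i‖ ^ 2 :=
    Finset.sum_nonneg fun i _ => sq_nonneg _
  have hm1 : (1 : ℝ) ≤ (m : ℝ) := by exact_mod_cast (by omega : 1 ≤ m)
  nlinarith [norm_nonneg (v i0), Finset.sum_nonneg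
    (fun i (_ : i ∈ Finset.univ.erase i0) => norm_nonneg (v i)), h4, h5]
end

section
/- Let V be a finite-dimensional complex inner product space, m ≥ 2, and ρ : ℝ^m → End(V) a Clifford multiplication. If v_1, ..., v_m ∈ V satisfy Σ_i ρ(e^i)v_i = 0, then for each fixed index j, |v_j|^2 ≤ ((m-1)/m)·Σ_{i=1}^m |v_i|^2. -/
/-!
Each `ρ(eᵢ)` is skew-adjoint with square `-1`, hence an isometry, so the relation
`∑ ρ(eᵢ) vᵢ = 0` and the triangle inequality give `‖v_j‖ ≤ ∑_{i ≠ j} ‖vᵢ‖`. Cauchy–Schwarz turns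
this into `‖v_j‖² ≤ (m - 1) ∑_{i ≠ j} ‖vᵢ‖²`, and adding `(m - 1) ‖v_j‖²` to both sides gives the
claim.
-/

open Finset

theorem LinearMap.norm_map_of_adjoint_comp_self {𝕜 E F : Type*} [RCLike 𝕜]
    [NormedAddCommGroup E] [InnerProductSpace 𝕜 E] [FiniteDimensional 𝕜 E]
    [NormedAddCommGroup F] [InnerProductSpace 𝕜 F] [FiniteDimensional 𝕜 F]
    {T : E →ₗ[𝕜] F} (hT : T.adjoint ∘ₗ T = LinearMap.id) (x : E) : ‖T x‖ = ‖x‖ :=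
  (LinearMap.norm_map_iff_inner_map_map T).2 (fun x y => by
    rw [← LinearMap.adjoint_inner_left, ← LinearMap.comp_apply, hT, LinearMap.id_apply]) x

theorem LinearMap.norm_map_of_adjoint_eq_neg_of_comp_self_eq_neg_id {𝕜 E : Type*} [RCLike 𝕜]
    [NormedAddCommGroup E] [InnerProductSpace 𝕜 E] [FiniteDimensional 𝕜 E]
    {T : E →ₗ[𝕜] E} (hskew : T.adjoint = -T) (hsq : T ∘ₗ T = -LinearMap.id) (x : E) :
    ‖T x‖ = ‖x‖ :=
  norm_map_of_adjoint_comp_self (by rw [hskew, LinearMap.neg_comp, hsq, neg_neg]) x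

theorem norm_le_sum_erase_norm_of_sum_eq_zero {ι E : Type*} [Fintype ι] [DecidableEq ι]
    [SeminormedAddCommGroup E] {w : ι → E} (hw : ∑ i, w i = 0) (j : ι) :
    ‖w j‖ ≤ ∑ i ∈ univ.erase j, ‖w i‖ := by
  have hwj : w j = -∑ i ∈ univ.erase j, w i := by
    rw [eq_neg_iff_add_eq_zero, add_sum_erase _ _ (mem_univ j), hw]
  rw [hwj, norm_neg]
  exact norm_sum_le _ _

theorem sq_le_mul_sum_sq_of_le_sum_erase {ι : Type*} [Fintype ι] [DecidableEq ι] {x : ι → ℝ} {j : ι}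
    (hxj : 0 ≤ x j) (h : x j ≤ ∑ i ∈ univ.erase j, x i) :
    x j ^ 2 ≤ ((Fintype.card ι - 1) / Fintype.card ι) * ∑ i, x i ^ 2 := by
  have hpos : 0 < Fintype.card ι := Fintype.card_pos_iff.2 ⟨j⟩
  have hcard : (#(univ.erase j) : ℝ) = Fintype.card ι - 1 := by
    rw [card_erase_of_mem (mem_univ j), card_univ, Nat.cast_sub hpos, Nat.cast_one]
  have hrest : x j ^ 2 ≤ (Fintype.card ι - 1) * ∑ i ∈ univ.erase j, x i ^ 2 :=
    hcard ▸ (pow_le_pow_left₀ hxj h 2).trans sq_sum_le_card_mul_sum_sq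
  rw [← add_sum_erase _ _ (mem_univ j), div_mul_eq_mul_div, le_div_iff₀ (by exact_mod_cast hpos)]
  linarith

theorem kato_yau_algebraic_index_general {m : ℕ} {V : Type*} [NormedAddCommGroup V]
    [InnerProductSpace ℂ V] [FiniteDimensional ℂ V]
    (ρ : EuclideanSpace ℝ (Fin m) →ₗ[ℝ] (V →ₗ[ℂ] V))
    (hskew : ∀ α, LinearMap.adjoint (ρ α) = -ρ α)
    (hsq : ∀ α, (ρ α) ∘ₗ (ρ α) = -((‖α‖ : ℂ) ^ 2) • (LinearMap.id : V →ₗ[ℂ] V))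
    (v : Fin m → V)
    (hv : ∑ i, ρ (EuclideanSpace.single i (1 : ℝ)) (v i) = 0) (j : Fin m) :
    ‖v j‖ ^ 2 ≤ (((m : ℝ) - 1) / m) * ∑ i, ‖v i‖ ^ 2 := by
  have hunit : ∀ i x, ‖ρ (EuclideanSpace.single i (1 : ℝ)) x‖ = ‖x‖ := fun i =>
    LinearMap.norm_map_of_adjoint_eq_neg_of_comp_self_eq_neg_id (hskew _)
      (by simp [hsq, PiLp.norm_single])
  have htriangle := norm_le_sum_erase_norm_of_sum_eq_zero hv j
  simp only [hunit] at htriangle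
  simpa using sq_le_mul_sum_sq_of_le_sum_erase (x := fun i => ‖v i‖) (norm_nonneg _) htriangle

/-- Kato–Yau inequality in algebraic form, with a distinguished index. -/
theorem kato_yau_algebraic_index {m : ℕ} {V : Type*} [NormedAddCommGroup V]
    [InnerProductSpace ℂ V] [FiniteDimensional ℂ V] (hm : 2 ≤ m)
    (ρ : EuclideanSpace ℝ (Fin m) →ₗ[ℝ] (V →ₗ[ℂ] V))
    (hskew : ∀ α, LinearMap.adjoint (ρ α) = -ρ α)
    (hsq : ∀ α, (ρ α) ∘ₗ (ρ α) = -((‖α‖ : ℂ) ^ 2) • (LinearMap.id : V →ₗ[ℂ] V))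
    (v : Fin m → V)
    (hv : ∑ i, ρ (EuclideanSpace.single i (1 : ℝ)) (v i) = 0) (j : Fin m) :
    ‖v j‖ ^ 2 ≤ (((m : ℝ) - 1) / m) * ∑ i, ‖v i‖ ^ 2 :=
  kato_yau_algebraic_index_general ρ hskew hsq v hv j
end
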